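/- arXiv:1802.03561 — 2 statements merged into one kernel-verified Lean document; each statement's English description precedes it below -/
import Mathlib

section
/- Let p be a prime, c₀ = 1 if p odd, c₀ = 2 if p = 2. Let x ∈ p^{c₀}·gl_{n₀}(ℤ_p) and let f ∈ ℚ[X_{ij}] be a polynomial in the entries of n₀×n₀ matrices. Then the limit as n → ∞ of (f(exp(p^n x)) - f(I))/p^n exists in ℚ_p and equals (df)_I(x) := Σ_{ij} (∂f/∂X_{ij})(I)·x_{ij}. -/
/-!
Since `‖1 / (k + 1)!‖ ≤ p ^ k` in `ℚ_[p]` and the entries of a matrix power obey the ultrametric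
bound `‖(y ^ k) i j‖ ≤ ε ^ k`, the exponential series converges as soon as the entries of `y` have
norm `ε < 1 / p`, and then `exp y = 1 + y + O(ε ^ 2)` entrywise. So `t ↦ exp (t • x)` has
derivative `x` at `0`, the chain rule makes `(df)_I(x)` the derivative of `t ↦ f (exp (t • x))`
at `0`, and the difference quotients along `t = p ^ n → 0` converge to it.
-/

open Filter

noncomputable def mexp {p : ℕ} [Fact p.Prime] {n : ℕ}
    (x : Matrix (Fin n) (Fin n) ℚ_[p]) : Matrix (Fin n) (Fin n) ℚ_[p] :=
  ∑' k : ℕ, ((k.factorial : ℚ_[p]))⁻¹ • x ^ k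

open Topology MvPolynomial

theorem Padic.norm_inv_factorial_succ_le {p : ℕ} [Fact p.Prime] (k : ℕ) :
    ‖((k + 1).factorial : ℚ_[p])⁻¹‖ ≤ (p : ℝ) ^ k := by
  have hf : ((k + 1).factorial : ℚ_[p]) ≠ 0 := Nat.cast_ne_zero.mpr (Nat.factorial_ne_zero _)
  rw [norm_inv, norm_eq_zpow_neg_valuation hf, valuation_natCast, ← zpow_neg, neg_neg,
    ← zpow_natCast]
  have hv := padicValNat_factorial_lt_of_ne_zero p k.add_one_ne_zero
  gcongr
  · exact_mod_cast (Fact.out : p.Prime).one_lt.le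
  · omega

theorem Matrix.norm_pow_succ_apply_le {ι R : Type*} [Fintype ι] [DecidableEq ι] [NormedRing R]
    [IsUltrametricDist R] {y : Matrix ι ι R} {C : ℝ} (hy : ∀ i j, ‖y i j‖ ≤ C) (k : ℕ)
    (i j : ι) : ‖(y ^ (k + 1)) i j‖ ≤ C ^ (k + 1) := by
  induction k generalizing j with
  | zero => simpa using hy i j
  | succ k ih =>
    have hC : 0 ≤ C := (norm_nonneg _).trans (hy i j)
    rw [pow_succ y, Matrix.mul_apply, pow_succ C]
    refine IsUltrametricDist.norm_sum_le_of_forall_le_of_nonneg (by positivity) fun l _ => ?_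
    exact (norm_mul_le _ _).trans (mul_le_mul (ih l) (hy l j) (norm_nonneg _) (by positivity))

theorem MvPolynomial.hasDerivAt_aeval {σ R 𝕜 : Type*} [Fintype σ] [CommSemiring R]
    [NontriviallyNormedField 𝕜] [Algebra R 𝕜] {g : σ → 𝕜 → 𝕜} {g' : σ → 𝕜} {t : 𝕜}
    (hg : ∀ s, HasDerivAt (g s) (g' s) t) (f : MvPolynomial σ R) :
    HasDerivAt (fun u => aeval (fun s => g s u) f)
      (∑ s, aeval (fun s => g s t) (pderiv s f) * g' s) t := by
  induction f using MvPolynomial.induction_on with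
  | C a => simpa using hasDerivAt_const t (algebraMap R 𝕜 a)
  | add f₁ f₂ h₁ h₂ => simpa [add_mul, Finset.sum_add_distrib] using h₁.fun_add h₂
  | mul_X f s hf =>
    classical
    simp only [map_mul, aeval_X]
    refine (hf.fun_mul (hg s)).congr_deriv ?_
    simp only [pderiv_mul, pderiv_X, Pi.single_apply, mul_ite, mul_one, mul_zero,
      apply_ite (aeval _), map_add, map_mul, map_zero, aeval_X, add_mul, ite_mul, zero_mul,
      Finset.sum_add_distrib, Finset.sum_mul, Finset.sum_ite_eq, Finset.mem_univ, if_true,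
      mul_right_comm]

section mexp

variable {p : ℕ} [Fact p.Prime] {n : ℕ}

theorem mexp_zero : mexp (0 : Matrix (Fin n) (Fin n) ℚ_[p]) = 1 := by
  rw [mexp, tsum_eq_single 0 fun k hk => by simp [zero_pow hk]]
  simp

variable {y : Matrix (Fin n) (Fin n) ℚ_[p]} {ε : ℝ}

theorem norm_inv_factorial_mul_pow_succ_apply_le (hy : ∀ i j, ‖y i j‖ ≤ ε) (k : ℕ)
    (i j : Fin n) :
    ‖((k + 1).factorial : ℚ_[p])⁻¹ * (y ^ (k + 1)) i j‖ ≤ ε * (p * ε) ^ k := by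
  have hε : 0 ≤ ε := (norm_nonneg _).trans (hy i j)
  calc _ ≤ (p : ℝ) ^ k * ε ^ (k + 1) :=
        (norm_mul_le _ _).trans (mul_le_mul (Padic.norm_inv_factorial_succ_le k)
          (Matrix.norm_pow_succ_apply_le hy k i j) (norm_nonneg _) (by positivity))
    _ = ε * (p * ε) ^ k := by ring

theorem hasSum_mexp_apply (hy : ∀ i j, ‖y i j‖ ≤ ε) (hε : (p : ℝ) * ε < 1) (i j : Fin n) :
    HasSum (fun k => (k.factorial : ℚ_[p])⁻¹ * (y ^ k) i j) (mexp y i j) := by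
  have hsum : ∀ i j, Summable fun k => (k.factorial : ℚ_[p])⁻¹ * (y ^ k) i j := by
    intro i j
    have hε₀ : 0 ≤ ε := (norm_nonneg _).trans (hy i j)
    refine (summable_nat_add_iff 1).mp <| Summable.of_norm_bounded
      ((summable_geometric_of_lt_one (by positivity) hε).mul_left ε) fun k => ?_
    exact norm_inv_factorial_mul_pow_succ_apply_le hy k i j
  have hmat : Summable fun k => (k.factorial : ℚ_[p])⁻¹ • y ^ k :=
    Pi.summable.mpr fun i => Pi.summable.mpr fun j => hsum i j
  exact Pi.hasSum.mp (Pi.hasSum.mp hmat.hasSum i) j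

theorem norm_mexp_apply_sub_le (hy : ∀ i j, ‖y i j‖ ≤ ε) (hε : (p : ℝ) * ε < 1) (i j : Fin n) :
    ‖mexp y i j - (1 : Matrix (Fin n) (Fin n) ℚ_[p]) i j - y i j‖ ≤ p * ε ^ 2 := by
  have hε₀ : 0 ≤ ε := (norm_nonneg _).trans (hy i j)
  have hs := hasSum_mexp_apply hy hε i j
  rw [← hs.tsum_eq, hs.summable.tsum_eq_zero_add,
    ((summable_nat_add_iff 1).mpr hs.summable).tsum_eq_zero_add]
  simp only [Nat.factorial_zero, zero_add, Nat.factorial_one, Nat.cast_one, inv_one, one_mul,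
    pow_zero, pow_one, add_sub_cancel_left]
  refine IsUltrametricDist.norm_tsum_le_of_forall_le_of_nonneg (by positivity) fun k => ?_
  have hpε : 0 ≤ (p : ℝ) * ε := by positivity
  calc _ ≤ ε * (p * ε) ^ (k + 1) := norm_inv_factorial_mul_pow_succ_apply_le hy (k + 1) i j
    _ ≤ ε * (p * ε) ^ 1 :=
        mul_le_mul_of_nonneg_left (pow_le_pow_of_le_one hpε hε.le (Nat.le_add_left 1 k)) hε₀
    _ = p * ε ^ 2 := by ring

theorem hasDerivAt_mexp_smul_apply (x : Matrix (Fin n) (Fin n) ℚ_[p]) (i j : Fin n) :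
    HasDerivAt (fun t : ℚ_[p] => mexp (t • x) i j) (x i j) 0 := by
  obtain ⟨M, hM⟩ := Finite.exists_le fun ij : Fin n × Fin n => ‖x ij.1 ij.2‖
  have hsmall : ∀ᶠ t : ℚ_[p] in 𝓝 0, (p : ℝ) * (‖t‖ * M) < 1 := by
    have hcont : Continuous fun t : ℚ_[p] => (p : ℝ) * (‖t‖ * M) := by fun_prop
    exact Tendsto.eventually_lt_const zero_lt_one (by simpa using hcont.tendsto 0)
  rw [hasDerivAt_iff_isLittleO_nhds_zero]
  refine (Asymptotics.IsBigO.of_bound (p * M ^ 2) ?_).trans_isLittleO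
    (Asymptotics.isLittleO_pow_id one_lt_two)
  filter_upwards [hsmall] with t ht
  have hy : ∀ k l, ‖(t • x) k l‖ ≤ ‖t‖ * M := fun k l => by
    rw [Matrix.smul_apply, smul_eq_mul, norm_mul]
    gcongr
    exact hM (k, l)
  calc ‖mexp ((0 + t) • x) i j - mexp ((0 : ℚ_[p]) • x) i j - t • x i j‖
      = ‖mexp (t • x) i j - (1 : Matrix (Fin n) (Fin n) ℚ_[p]) i j - (t • x) i j‖ := by
        simp [mexp_zero]
    _ ≤ p * (‖t‖ * M) ^ 2 := norm_mexp_apply_sub_le hy ht i j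
    _ = p * M ^ 2 * ‖t ^ 2‖ := by rw [norm_pow]; ring

end mexp

theorem stmt_3_general (p : ℕ) [Fact p.Prime] (n₀ : ℕ)
    (x : Matrix (Fin n₀) (Fin n₀) ℚ_[p])
    (f : MvPolynomial (Fin n₀ × Fin n₀) ℚ) :
    Tendsto
      (fun n : ℕ =>
        ((MvPolynomial.aeval fun ij : Fin n₀ × Fin n₀ =>
            (mexp ((p : ℚ_[p]) ^ n • x)) ij.1 ij.2) f
          - (MvPolynomial.aeval fun ij : Fin n₀ × Fin n₀ =>
              (1 : Matrix (Fin n₀) (Fin n₀) ℚ_[p]) ij.1 ij.2) f) / (p : ℚ_[p]) ^ n)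
      atTop
      (nhds (∑ ij : Fin n₀ × Fin n₀,
        (MvPolynomial.aeval fun kl : Fin n₀ × Fin n₀ =>
          (1 : Matrix (Fin n₀) (Fin n₀) ℚ_[p]) kl.1 kl.2) (MvPolynomial.pderiv ij f)
          * x ij.1 ij.2)) := by
  have hderiv := MvPolynomial.hasDerivAt_aeval (t := 0)
    (fun ij : Fin n₀ × Fin n₀ => hasDerivAt_mexp_smul_apply x ij.1 ij.2) f
  simp only [zero_smul, mexp_zero] at hderiv
  have hp : (p : ℚ_[p]) ≠ 0 := by exact_mod_cast (Fact.out : p.Prime).ne_zero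
  have hpow : Tendsto (fun n : ℕ => (p : ℚ_[p]) ^ n) atTop (𝓝[≠] 0) :=
    tendsto_nhdsWithin_iff.mpr ⟨tendsto_pow_atTop_nhds_zero_of_norm_lt_one Padic.norm_p_lt_one,
      Eventually.of_forall fun n => pow_ne_zero n hp⟩
  refine (hderiv.tendsto_slope.comp hpow).congr fun n => ?_
  simp [slope_def_field, mexp_zero]

/-- For a prime `p`, `c₀ = 1` if `p` odd and `c₀ = 2` if `p = 2`,
`x ∈ p^{c₀}·gl_{n₀}(ℤ_p)` and a polynomial `f ∈ ℚ[X_{ij}]` in the matrix entries,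
the limit of `(f(exp(p^n x)) - f(I))/p^n` as `n → ∞` exists in `ℚ_p` and equals
`(df)_I(x) = Σ_{ij} (∂f/∂X_{ij})(I)·x_{ij}`. -/
theorem stmt_3 (p : ℕ) [Fact p.Prime] (n₀ : ℕ) (c₀ : ℕ)
    (hc : c₀ = if p = 2 then 2 else 1)
    (x : Matrix (Fin n₀) (Fin n₀) ℚ_[p])
    (hx : ∀ i j, ‖x i j‖ ≤ (p : ℝ) ^ (-(c₀ : ℤ)))
    (f : MvPolynomial (Fin n₀ × Fin n₀) ℚ) :
    Tendsto
      (fun n : ℕ =>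
        ((MvPolynomial.aeval fun ij : Fin n₀ × Fin n₀ =>
            (mexp ((p : ℚ_[p]) ^ n • x)) ij.1 ij.2) f
          - (MvPolynomial.aeval fun ij : Fin n₀ × Fin n₀ =>
              (1 : Matrix (Fin n₀) (Fin n₀) ℚ_[p]) ij.1 ij.2) f) / (p : ℚ_[p]) ^ n)
      atTop
      (nhds (∑ ij : Fin n₀ × Fin n₀,
        (MvPolynomial.aeval fun kl : Fin n₀ × Fin n₀ =>
          (1 : Matrix (Fin n₀) (Fin n₀) ℚ_[p]) kl.1 kl.2) (MvPolynomial.pderiv ij f)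
          * x ij.1 ij.2)) :=
  stmt_3_general p n₀ x f
end

section
/- Let A be a PID with fraction field F, let G be an affine F-subvariety of GL_{n₀} defined by an ideal I of F[GL_{n₀}], and let 𝒢 be its schematic closure in GL_{n₀} over A, i.e. Spec(A[GL_{n₀}]/(A[GL_{n₀}] ∩ I)). Then for any A-algebra R which is free as an A-module, the R-points 𝒢(R) are naturally identified with G(R ⊗_A F) ∩ GL_{n₀}(R). -/
/-!
An equation `f ∈ I` over `F` becomes, after clearing denominators, an equation `b • f` with
coefficients in `A`, i.e. an element of `I ∩ A[X]`; since `b` is invertible in `F ⊗[A] R`,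
`g` satisfies `f` there as soon as it satisfies `b • f` over `R`. Conversely, `R → F ⊗[A] R`
is injective because the free module `R` is flat and `A → F` is injective, so an equation
with coefficients in `A` holds over `R` as soon as it holds over `F ⊗[A] R`.
-/

open scoped TensorProduct

namespace MvPolynomial

variable {σ A : Type*} [CommRing A]

attribute [local instance] algebraMvPolynomial in
theorem exists_map_eq_C_mul (M : Submonoid A) {S : Type*} [CommRing S] [Algebra A S]
    [IsLocalization M S] (p : MvPolynomial σ S) :
    ∃ q : MvPolynomial σ A, ∃ m : M, map (algebraMap A S) q = C (algebraMap A S m) * p := by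
  obtain ⟨⟨q, ⟨_, m, hm, rfl⟩⟩, hq⟩ := IsLocalization.surj (M.map (C (σ := σ))) p
  refine ⟨q, ⟨m, hm⟩, ?_⟩
  simpa [mul_comm] using hq.symm

theorem aeval_tmul_map {S R : Type*} [CommRing S] [Algebra A S] [CommRing R] [Algebra A R]
    (x : σ → R) (q : MvPolynomial σ A) :
    aeval (fun i => (1 : S) ⊗ₜ[A] x i) (map (algebraMap A S) q) =
      (1 : S) ⊗ₜ[A] aeval x q := by
  rw [aeval_map_algebraMap]
  exact (comp_aeval_apply x (Algebra.TensorProduct.includeRight : R →ₐ[A] S ⊗[A] R) q).symm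

theorem aeval_tmul_eq_zero_of_forall_comap (M : Submonoid A) {S R : Type*} [CommRing S]
    [Algebra A S] [IsLocalization M S] [CommRing R] [Algebra A R] {I : Ideal (MvPolynomial σ S)}
    {x : σ → R} (hx : ∀ q ∈ I.comap (map (algebraMap A S)), aeval x q = 0)
    {p : MvPolynomial σ S} (hp : p ∈ I) :
    aeval (fun i => (1 : S) ⊗ₜ[A] x i) p = 0 := by
  obtain ⟨q, m, hq⟩ := exists_map_eq_C_mul M p
  have hqI : q ∈ I.comap (map (algebraMap A S)) := by
    rw [Ideal.mem_comap, hq]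
    exact I.mul_mem_left _ hp
  have hm : IsUnit (algebraMap S (S ⊗[A] R) (algebraMap A S m)) :=
    (IsLocalization.map_units S m).map _
  have key := aeval_tmul_map (S := S) x q
  rw [hq, hx q hqI, TensorProduct.tmul_zero, map_mul, aeval_C] at key
  exact hm.mul_right_eq_zero.mp key

end MvPolynomial

open MvPolynomial in
theorem stmt_9_general (A : Type*) [CommRing A]
    (F : Type*) [Field F] [Algebra A F] [IsFractionRing A F]
    (n : ℕ) (I : Ideal (MvPolynomial (Fin n × Fin n) F))
    (R : Type*) [CommRing R] [Algebra A R] [Module.Free A R]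
    (g : Matrix (Fin n) (Fin n) R) :
    (∀ f ∈ Ideal.comap (MvPolynomial.map (algebraMap A F)) I,
      (MvPolynomial.aeval fun ij : Fin n × Fin n => g ij.1 ij.2) f = (0 : R))
    ↔ (∀ f ∈ I,
      (MvPolynomial.aeval fun ij : Fin n × Fin n =>
        ((1 : F) ⊗ₜ[A] g ij.1 ij.2 : F ⊗[A] R)) f = 0) := by
  refine ⟨fun H _ hf => aeval_tmul_eq_zero_of_forall_comap (nonZeroDivisors A) H hf,
    fun H q hq => ?_⟩
  apply Algebra.TensorProduct.includeRight_injective (A := F) (IsFractionRing.injective A F)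
  rw [map_zero, Algebra.TensorProduct.includeRight_apply, ← aeval_tmul_map, H _ hq]

/-- Let `A` be a PID with fraction field `F`, and let `G ⊆ GL_{n}` be the
affine `F`-subvariety cut out by an ideal `I` of polynomials in the matrix entries. Let
`𝒢` be the schematic closure of `G` over `A`, cut out by `I ∩ A[GL_n]` (the preimage of
`I` under `A[X_{ij}] → F[X_{ij}]`). Then for any `A`-algebra `R` that is free as an
`A`-module, the `R`-points of `𝒢` are naturally identified with
`G(R ⊗_A F) ∩ GL_n(R)`: an invertible matrix `g` over `R` satisfies the equations of
`I ∩ A[GL_n]` iff its image in `F ⊗_A R ≅ R ⊗_A F` satisfies the equations of `I`. -/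
theorem stmt_9 (A : Type*) [CommRing A] [IsDomain A] [IsPrincipalIdealRing A]
    (F : Type*) [Field F] [Algebra A F] [IsFractionRing A F]
    (n : ℕ) (I : Ideal (MvPolynomial (Fin n × Fin n) F))
    (R : Type*) [CommRing R] [Algebra A R] [Module.Free A R]
    (g : Matrix (Fin n) (Fin n) R) (hg : IsUnit g.det) :
    (∀ f ∈ Ideal.comap (MvPolynomial.map (algebraMap A F)) I,
      (MvPolynomial.aeval fun ij : Fin n × Fin n => g ij.1 ij.2) f = (0 : R))
    ↔ (∀ f ∈ I,
      (MvPolynomial.aeval fun ij : Fin n × Fin n =>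
        ((1 : F) ⊗ₜ[A] g ij.1 ij.2 : F ⊗[A] R)) f = 0) :=
  stmt_9_general A F n I R g
end
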